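/- (Gauge transformation to companion form) Let k ∈ ℂ and let L₁₁, L₁₂, L₂₁ : ℝ → ℂ be twice continuously differentiable with L₁₂(x) ≠ 0 for all x, and let g : ℝ → ℂ be differentiable with g(x)² = L₁₂(x) for all x. Set L = [[L₁₁, L₁₂],[L₂₁, −L₁₁]] and f = [[g, 0],[−L₁₁/g − k·g'/g², 1/g]]. Then det f = 1 and f⁻¹·L·f + k·f⁻¹·(∂_x f) = [[0, 1],[T, 0]], where T = L₂₁·L₁₂ + L₁₁² + k·L₁₁·(∂_x L₁₂)/L₁₂ − k·∂_x L₁₁ − (k²/2)·(∂_x² L₁₂)/L₁₂ + (3k²/4)·(∂_x L₁₂)²/L₁₂². -/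

import Mathlib

/-- The gauge matrix `f = [[g, 0], [−L₁₁/g − k·g'/g², 1/g]]`. -/
noncomputable def gaugeF (k : ℂ) (L11 g : ℝ → ℂ) (y : ℝ) : Matrix (Fin 2) (Fin 2) ℂ :=
  !![g y, 0; -L11 y / g y - k * deriv g y / (g y) ^ 2, 1 / g y]

/-- The Lax matrix `L = [[L₁₁, L₁₂], [L₂₁, −L₁₁]]`. -/
noncomputable def laxL (L11 L12 L21 : ℝ → ℂ) (y : ℝ) : Matrix (Fin 2) (Fin 2) ℂ :=
  !![L11 y, L12 y; L21 y, -L11 y]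

/-- `T = L₂₁L₁₂ + L₁₁² + k·L₁₁·L₁₂'/L₁₂ − k·L₁₁' − (k²/2)·L₁₂''/L₁₂ + (3k²/4)·(L₁₂')²/L₁₂²`. -/
noncomputable def Tfun (k : ℂ) (L11 L12 L21 : ℝ → ℂ) (y : ℝ) : ℂ :=
  L21 y * L12 y + L11 y ^ 2 + k * L11 y * deriv L12 y / L12 y - k * deriv L11 y
    - k ^ 2 / 2 * deriv (deriv L12) y / L12 y
    + 3 * k ^ 2 / 4 * (deriv L12 y) ^ 2 / (L12 y) ^ 2

lemma smul_fin2' (x a b c d : ℂ) : x • !![a, b; c, d] = !![x * a, x * b; x * c, x * d] := by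
  simp [Matrix.smul_of, Matrix.smul_cons, Matrix.smul_empty, smul_eq_mul]

lemma add_fin2' (a b c d e f g h : ℂ) :
    !![a, b; c, d] + !![e, f; g, h] = !![a + e, b + f; c + g, d + h] := by
  ext i j; fin_cases i <;> fin_cases j <;> rfl

/-- Auxiliary purely algebraic identity. -/
lemma gauge_alg (k A A' A'' B B' N T : ℂ) (hA : A ≠ 0)
    (hT : T = N * A ^ 2 + B ^ 2 + k * B * (2 * A * A') / A ^ 2 - k * B'
        - k ^ 2 / 2 * (2 * (A' * A' + A * A'')) / A ^ 2
        + 3 * k ^ 2 / 4 * (2 * A * A') ^ 2 / (A ^ 2) ^ 2) :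
    !![1 / A, 0; B / A + k * A' / A ^ 2, A] * !![B, A ^ 2; N, -B]
        * !![A, 0; -B / A - k * A' / A ^ 2, 1 / A]
      + k • (!![1 / A, 0; B / A + k * A' / A ^ 2, A] *
          !![A', 0;
             (-B' * A - -B * A') / A ^ 2
               - (k * A'' * A ^ 2 - k * A' * (A' * A + A * A')) / (A ^ 2) ^ 2,
             (0 * A - 1 * A') / A ^ 2])
      = !![0, 1; T, 0] := by
  subst hT
  have hI : A * A⁻¹ = 1 := mul_inv_cancel₀ hA
  rw [Matrix.mul_fin_two, Matrix.mul_fin_two, Matrix.mul_fin_two, smul_fin2', add_fin2']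
  refine congrArg Matrix.of (Matrix.vec2_eq (Matrix.vec2_eq ?_ ?_) (Matrix.vec2_eq ?_ ?_))
  · field_simp; ring
  · field_simp; ring
  · linear_combination (B ^ 2 + -1 * A * A⁻¹ * B ^ 2 + -1 * k * B' + -1 * k * A⁻¹ * A' * B
      + -1 * k * A * A⁻¹ * B' + -2 * k * A * A⁻¹ ^ 2 * A' * B + -2 * k ^ 2 * A⁻¹ ^ 2 * A' ^ 2
      + -1 * k ^ 2 * A * A⁻¹ ^ 2 * A'' + -2 * k ^ 2 * A * A⁻¹ ^ 3 * A' ^ 2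
      + -1 * k ^ 2 * A ^ 2 * A⁻¹ ^ 3 * A'') * hI
  · field_simp; ring

theorem gauge_to_companion_form (k : ℂ) (L11 L12 L21 : ℝ → ℂ)
    (h11 : ContDiff ℝ 2 L11) (h12 : ContDiff ℝ 2 L12) (h21 : ContDiff ℝ 2 L21)
    (h12ne : ∀ x, L12 x ≠ 0)
    (g : ℝ → ℂ) (hg : Differentiable ℝ g) (hgsq : ∀ x, g x ^ 2 = L12 x) (x : ℝ) :
    Matrix.det (gaugeF k L11 g x) = 1 ∧
    (gaugeF k L11 g x)⁻¹ * laxL L11 L12 L21 x * gaugeF k L11 g x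
        + k • ((gaugeF k L11 g x)⁻¹
            * Matrix.of fun i j => deriv (fun y => gaugeF k L11 g y i j) x)
      = !![0, 1; Tfun k L11 L12 L21 x, 0] := by
  have hgne : ∀ y, g y ≠ 0 := by
    intro y hy
    exact h12ne y (by rw [← hgsq y, hy]; ring)
  have hd12 : Differentiable ℝ (deriv L12) := by
    have : ContDiff ℝ (1+1 : ℕ) L12 := by norm_num; exact h12
    exact (((contDiff_succ_iff_deriv (n := 1)).mp (by rw [one_add_one_eq_two]; exact h12)).2.2).differentiable one_ne_zero
  have hL12' : ∀ y, deriv L12 y = 2 * g y * deriv g y := by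
    intro y
    have h1 : HasDerivAt (fun z => g z ^ 2) (deriv g y * g y + g y * deriv g y) y := by
      simp only [pow_two]
      exact (hg y).hasDerivAt.mul (hg y).hasDerivAt
    have h2 : (fun z => g z ^ 2) = L12 := funext hgsq
    rw [← h2, h1.deriv]; ring
  have hgd : deriv g = fun y => deriv L12 y / (2 * g y) := by
    funext y
    rw [eq_div_iff (by simp [hgne y]), hL12']; ring
  have hdg : Differentiable ℝ (deriv g) := by
    rw [hgd]
    exact hd12.div ((differentiable_const _).mul hg) (fun y => by simp [hgne y])
  have hL12'' : deriv (deriv L12) x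
      = 2 * (deriv g x * deriv g x + g x * deriv (deriv g) x) := by
    have h2 : deriv L12 = fun y => 2 * (g y * deriv g y) := by
      funext y; rw [hL12' y]; ring
    have h1 : HasDerivAt (fun y => 2 * (g y * deriv g y))
        (2 * (deriv g x * deriv g x + g x * deriv (deriv g) x)) x :=
      (((hg x).hasDerivAt.mul (hdg x).hasDerivAt)).const_mul 2
    rw [h2, h1.deriv]
  have gF00 : (fun y => gaugeF k L11 g y 0 0) = g := by funext y; simp [gaugeF]
  have gF01 : (fun y => gaugeF k L11 g y 0 1) = fun _ => (0:ℂ) := by funext y; simp [gaugeF]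
  have gF10 : (fun y => gaugeF k L11 g y 1 0)
      = fun y => -L11 y / g y - k * deriv g y / (g y) ^ 2 := by funext y; simp [gaugeF]
  have gF11 : (fun y => gaugeF k L11 g y 1 1) = fun y => 1 / g y := by funext y; simp [gaugeF]
  have hD11 : HasDerivAt (fun y => 1 / g y)
      ((0 * g x - 1 * deriv g x) / g x ^ 2) x :=
    (hasDerivAt_const x (1:ℂ)).div (hg x).hasDerivAt (hgne x)
  have hDa : HasDerivAt (fun y => -L11 y / g y)
      ((-deriv L11 x * g x - -L11 x * deriv g x) / g x ^ 2) x :=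
    ((h11.differentiable (by norm_num) x).hasDerivAt.neg).div (hg x).hasDerivAt (hgne x)
  have hsq : HasDerivAt (fun y => g y ^ 2) (deriv g x * g x + g x * deriv g x) x := by
    simp only [pow_two]
    exact (hg x).hasDerivAt.mul (hg x).hasDerivAt
  have hDb : HasDerivAt (fun y => k * deriv g y / g y ^ 2)
      ((k * deriv (deriv g) x * g x ^ 2
          - k * deriv g x * (deriv g x * g x + g x * deriv g x)) / (g x ^ 2) ^ 2) x :=
    ((hdg x).hasDerivAt.const_mul k).div hsq (pow_ne_zero 2 (hgne x))
  have hD10 := hDa.sub hDb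
  have e00 : deriv (fun y => gaugeF k L11 g y 0 0) x = deriv g x := by rw [gF00]
  have e01 : deriv (fun y => gaugeF k L11 g y 0 1) x = 0 := by rw [gF01]; simp
  have e10 : deriv (fun y => gaugeF k L11 g y 1 0) x
      = (-deriv L11 x * g x - -L11 x * deriv g x) / g x ^ 2
        - (k * deriv (deriv g) x * g x ^ 2
            - k * deriv g x * (deriv g x * g x + g x * deriv g x)) / (g x ^ 2) ^ 2 := by
    rw [gF10]; exact hD10.deriv
  have e11 : deriv (fun y => gaugeF k L11 g y 1 1) x = (0 * g x - 1 * deriv g x) / g x ^ 2 := by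
    rw [gF11]; exact hD11.deriv
  have hMder : (Matrix.of fun i j => deriv (fun y => gaugeF k L11 g y i j) x)
      = !![deriv g x, 0;
           (-deriv L11 x * g x - -L11 x * deriv g x) / g x ^ 2
             - (k * deriv (deriv g) x * g x ^ 2
                 - k * deriv g x * (deriv g x * g x + g x * deriv g x)) / (g x ^ 2) ^ 2,
           (0 * g x - 1 * deriv g x) / g x ^ 2] := by
    rw [Matrix.eta_fin_two (Matrix.of fun i j => deriv (fun y => gaugeF k L11 g y i j) x)]
    simp only [Matrix.of_apply, e00, e01, e10, e11]
  have hinv : (gaugeF k L11 g x)⁻¹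
      = !![1 / g x, 0; L11 x / g x + k * deriv g x / g x ^ 2, g x] := by
    apply Matrix.inv_eq_left_inv
    rw [show gaugeF k L11 g x
        = !![g x, 0; -L11 x / g x - k * deriv g x / (g x) ^ 2, 1 / g x] from rfl,
      Matrix.mul_fin_two, Matrix.one_fin_two]
    refine congrArg Matrix.of (Matrix.vec2_eq (Matrix.vec2_eq ?_ ?_) (Matrix.vec2_eq ?_ ?_))
    · field_simp [hgne x]; ring
    · simp
    · field_simp [hgne x]; ring
    · field_simp [hgne x]; ring
  have h12x : L12 x = g x ^ 2 := (hgsq x).symm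
  constructor
  · simp only [gaugeF, Matrix.det_fin_two_of]
    rw [zero_mul, sub_zero, mul_one_div, div_self (hgne x)]
  · rw [hinv, hMder,
      show laxL L11 L12 L21 x = !![L11 x, g x ^ 2; L21 x, -L11 x] by
        simp only [laxL]; rw [h12x],
      show gaugeF k L11 g x
          = !![g x, 0; -L11 x / g x - k * deriv g x / (g x) ^ 2, 1 / g x] from rfl]
    apply gauge_alg k (g x) (deriv g x) (deriv (deriv g) x) (L11 x) (deriv L11 x) (L21 x)
      _ (hgne x)
    simp only [Tfun]
    rw [hL12'', hL12' x, h12x]
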